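/- For every Kripke structure A, world u, programs α, β and formula p: if A,u ⊨ [α^⟲]p and A,u ⊨ [β^⟲]p then A,u ⊨ [α^⟲;β^⟲]p. -/
import Mathlib


mutual
inductive Formula (P R : Type) : Type
  | atom : P → Formula P R
  | tt : Formula P R
  | or : Formula P R → Formula P R → Formula P R
  | neg : Formula P R → Formula P R
  | dia : Program P R → Formula P R → Formula P R
inductive Program (P R : Type) : Type
  | atom : R → Program P R
  | seq : Program P R → Program P R → Program P R
  | union : Program P R → Program P R → Program P R
  | inter : Program P R → Program P R → Program P R
  | test : Formula P R → Program P R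
end

structure Kripke (P R W : Type) where
  val : P → W → Prop
  rel : R → W → W → Prop

mutual
def Sat {P R W : Type} (A : Kripke P R W) : W → Formula P R → Prop
  | u, .atom p => A.val p u
  | _, .tt => True
  | u, .or φ ψ => Sat A u φ ∨ Sat A u ψ
  | u, .neg φ => ¬ Sat A u φ
  | u, .dia α φ => ∃ v, PRel A α u v ∧ Sat A v φ
def PRel {P R W : Type} (A : Kripke P R W) : Program P R → W → W → Prop
  | .atom a, u, v => A.rel a u v
  | .seq α β, u, v => ∃ w, PRel A α u w ∧ PRel A β w v
  | .union α β, u, v => PRel A α u v ∨ PRel A β u v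
  | .inter α β, u, v => PRel A α u v ∧ PRel A β u v
  | .test φ, u, v => u = v ∧ Sat A u φ
end

def Formula.ff {P R : Type} : Formula P R := .neg .tt
def Formula.conj {P R : Type} (φ ψ : Formula P R) : Formula P R := .neg (.or (.neg φ) (.neg ψ))
def Formula.imp {P R : Type} (φ ψ : Formula P R) : Formula P R := .or (.neg φ) ψ
def Formula.iff {P R : Type} (φ ψ : Formula P R) : Formula P R := (φ.imp ψ).conj (ψ.imp φ)
def Formula.box {P R : Type} (α : Program P R) (φ : Formula P R) : Formula P R := .neg (.dia α (.neg φ))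
def Program.loop {P R : Type} (α : Program P R) : Program P R := .inter α (.test .tt)

theorem stmt4 {P R W : Type} (A : Kripke P R W) (u : W) (α β : Program P R) (p : Formula P R)
    (h1 : Sat A u (Formula.box α.loop p)) (h2 : Sat A u (Formula.box β.loop p)) :
    Sat A u (Formula.box (α.loop.seq β.loop) p) := by
  simp only [Formula.box, Program.loop, Sat, PRel] at *
  rintro ⟨v, ⟨w, ⟨-, rfl, -⟩, hβ⟩, hv⟩
  obtain ⟨-, rfl, -⟩ := hβ.2
  exact h2 ⟨v, hβ, hv⟩
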